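/- arXiv:1909.08156 — 6 statements merged into one kernel-verified Lean document; each statement's English description precedes it below -/
import Mathlib

section
/- Linear convergence of kernel gradient descent under a uniform spectral lower bound: let n ≥ 1, T > 0, λ > 0, y ∈ ℝⁿ, let K : [0,T] → (n×n real matrices) be continuous with vᵀ K(t) v ≥ (λ/2) ‖v‖₂² for every v ∈ ℝⁿ and every t ∈ [0,T], and let f : [0,T] → ℝⁿ be differentiable with f'(t) = −(1/n) K(t) (f(t) − y). Then for all t ∈ [0,T], ‖f(t) − y‖₂² ≤ e^{−λ t/(2n)} ‖f(0) − y‖₂². -/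
open scoped RealInnerProductSpace

/-- Linear convergence of kernel gradient descent under a uniform spectral
lower bound: if `K : [0,T] →` (n×n matrices) is continuous with `vᵀ K(t) v ≥ (λ/2) ‖v‖₂²`
for all `v` and `t ∈ [0,T]`, and `f' (t) = -(1/n) K(t) (f(t) - y)`, then
`‖f(t) - y‖₂² ≤ exp(-λ t/(2n)) ‖f(0) - y‖₂²` for all `t ∈ [0,T]`. -/
theorem stmt_3 (n : ℕ) (hn : 1 ≤ n) (T lam : ℝ) (hT : 0 < T) (hlam : 0 < lam)
    (y : EuclideanSpace ℝ (Fin n))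
    (K : ℝ → Matrix (Fin n) (Fin n) ℝ)
    (hKcont : ContinuousOn K (Set.Icc 0 T))
    (hKpos : ∀ t ∈ Set.Icc (0 : ℝ) T, ∀ v : EuclideanSpace ℝ (Fin n),
      lam / 2 * ‖v‖ ^ 2 ≤ ⟪v, Matrix.toEuclideanLin (K t) v⟫)
    (f : ℝ → EuclideanSpace ℝ (Fin n))
    (hf : ∀ t ∈ Set.Icc (0 : ℝ) T,
      HasDerivWithinAt f (-(1 / n : ℝ) • Matrix.toEuclideanLin (K t) (f t - y))
        (Set.Icc 0 T) t) :
    ∀ t ∈ Set.Icc (0 : ℝ) T,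
      ‖f t - y‖ ^ 2 ≤ Real.exp (-(lam * t) / (2 * n)) * ‖f 0 - y‖ ^ 2 := by
  have hn' : (0 : ℝ) < n := by exact_mod_cast hn
  set u : ℝ → EuclideanSpace ℝ (Fin n) := fun t => f t - y with hu
  set d : ℝ → EuclideanSpace ℝ (Fin n) :=
    fun t => -(1 / n : ℝ) • Matrix.toEuclideanLin (K t) (f t - y) with hd
  -- derivative of u within Icc
  have hu' : ∀ t ∈ Set.Icc (0 : ℝ) T, HasDerivWithinAt u (d t) (Set.Icc 0 T) t := by
    intro t ht
    exact (hf t ht).sub_const y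
  set g : ℝ → ℝ := fun t => ⟪u t, u t⟫ with hg
  set g' : ℝ → ℝ := fun t => ⟪u t, d t⟫ + ⟪d t, u t⟫ with hg'
  have hgd : ∀ t ∈ Set.Icc (0 : ℝ) T, HasDerivWithinAt g (g' t) (Set.Icc 0 T) t := by
    intro t ht
    exact (hu' t ht).inner ℝ (hu' t ht)
  have hgc : ContinuousOn g (Set.Icc 0 T) := by
    have hfc : ContinuousOn u (Set.Icc 0 T) := fun t ht => (hu' t ht).continuousWithinAt
    exact hfc.inner hfc
  have key : ∀ t ∈ Set.Icc (0 : ℝ) T,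
      g t ≤ gronwallBound (g 0) (-(lam / (2 * n))) 0 (t - 0) := by
    apply le_gronwallBound_of_liminf_deriv_right_le hgc
    · intro x hx r hr
      have hx' : x ∈ Set.Icc (0 : ℝ) T := Set.Ico_subset_Icc_self hx
      have h : HasDerivWithinAt g (g' x) (Set.Ici x) x :=
        (hgd x hx').mono_of_mem_nhdsWithin (Icc_mem_nhdsGE_of_mem hx)
      exact h.liminf_right_slope_le hr
    · exact le_rfl
    · intro x hx
      have hx' : x ∈ Set.Icc (0 : ℝ) T := Set.Ico_subset_Icc_self hx
      have hpos := hKpos x hx' (u x)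
      have hdx : ⟪u x, d x⟫ = -(1 / n : ℝ) * ⟪u x, Matrix.toEuclideanLin (K x) (u x)⟫ :=
        real_inner_smul_right _ _ _
      have hgx : g x = ‖u x‖ ^ 2 := real_inner_self_eq_norm_sq (u x)
      have hcomm : ⟪d x, u x⟫ = ⟪u x, d x⟫ := real_inner_comm _ _
      have hnn : (0 : ℝ) ≤ ‖u x‖ ^ 2 := sq_nonneg _
      show ⟪u x, d x⟫ + ⟪d x, u x⟫ ≤ -(lam / (2 * ↑n)) * g x + 0
      rw [hcomm, hdx, hgx, add_zero]
      set s : ℝ := ‖u x‖ ^ 2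
      set I : ℝ := ⟪u x, Matrix.toEuclideanLin (K x) (u x)⟫
      have e1 : -(1 / (n : ℝ)) * I + -(1 / (n : ℝ)) * I = -(2 / (n : ℝ)) * I := by ring
      have e2 : -(lam / (2 * (n : ℝ))) * s = -(2 / (n : ℝ)) * (lam / 4 * s) := by ring
      rw [e1, e2]
      apply mul_le_mul_of_nonpos_left ?_ (neg_nonpos.mpr (by positivity : (0:ℝ) ≤ 2 / (n : ℝ)))
      nlinarith [mul_nonneg hlam.le hnn]
  intro t ht
  have := key t ht
  rw [sub_zero, gronwallBound_ε0] at this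
  have hgt : g t = ‖f t - y‖ ^ 2 := real_inner_self_eq_norm_sq _
  have hg0 : g 0 = ‖f 0 - y‖ ^ 2 := real_inner_self_eq_norm_sq _
  rw [hgt, hg0] at this
  calc ‖f t - y‖ ^ 2 ≤ ‖f 0 - y‖ ^ 2 * Real.exp (-(lam / (2 * n)) * t) := this
    _ = Real.exp (-(lam * t) / (2 * n)) * ‖f 0 - y‖ ^ 2 := by
        rw [mul_comm]; congr 1; ring
end

section
/- Linear convergence under an initial spectral gap with a kernel that stays λ/2-close to its initial value: let n ≥ 1, T > 0, λ > 0, y ∈ ℝⁿ, let K : [0,T] → (n×n real symmetric matrices) be continuous with vᵀ K(0) v ≥ λ ‖v‖₂² for every v ∈ ℝⁿ, and suppose ‖K(t) − K(0)‖_{op} ≤ λ/2 for all t ∈ [0,T], where ‖·‖_{op} is the operator norm with respect to the Euclidean norm. If f : [0,T] → ℝⁿ is differentiable with f'(t) = −(1/n) K(t)(f(t) − y), then for all t ∈ [0,T], ‖f(t) − y‖₂² ≤ e^{−λ t/(2n)} ‖f(0) − y‖₂². -/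
/-!
Perturbing `K 0` by at most `λ/2` in operator norm keeps `K t` coercive with constant `λ/2`.
For `u = f - y` this gives `d/dt ‖u‖² = -(2/n) ⟪u, K u⟫ ≤ -(λ/n) ‖u‖²`, so `exp (c t) ‖u t‖²`
is antitone for `c ≤ λ/n`, which is the claimed decay.
-/

open scoped RealInnerProductSpace

open Real Set

section Decay

variable {s : Set ℝ} {g g' : ℝ → ℝ} {c : ℝ}

theorem antitoneOn_exp_mul_of_hasDerivWithinAt_le_neg_mul (hs : Convex ℝ s)
    (hg : ∀ t ∈ s, HasDerivWithinAt g (g' t) s t) (hg' : ∀ t ∈ interior s, g' t ≤ -c * g t) :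
    AntitoneOn (fun t => exp (c * t) * g t) s := by
  refine antitoneOn_of_hasDerivWithinAt_nonpos hs
    (f' := fun t => exp (c * t) * (c * g t + g' t)) ?_ (fun t ht => ?_) (fun t ht => ?_)
  · exact (continuous_const.mul continuous_id).rexp.continuousOn.mul
      fun t ht => (hg t ht).continuousWithinAt
  · have hexp : HasDerivAt (fun t => exp (c * t)) (exp (c * t) * c) t := by
      simpa using ((hasDerivAt_id t).const_mul c).exp
    exact (hexp.hasDerivWithinAt.mul ((hg t (interior_subset ht)).mono interior_subset)).congr_deriv
      (by ring)
  · exact mul_nonpos_of_nonneg_of_nonpos (exp_nonneg _) (by linarith [hg' t ht])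

theorem le_exp_mul_of_hasDerivWithinAt_le_neg_mul (hs : Convex ℝ s)
    (hg : ∀ t ∈ s, HasDerivWithinAt g (g' t) s t) (hg' : ∀ t ∈ interior s, g' t ≤ -c * g t)
    {a t : ℝ} (ha : a ∈ s) (ht : t ∈ s) (hat : a ≤ t) :
    g t ≤ exp (-(c * (t - a))) * g a := by
  have hanti := antitoneOn_exp_mul_of_hasDerivWithinAt_le_neg_mul hs hg hg' ha ht hat
  rw [mul_sub, neg_sub, exp_sub, div_mul_eq_mul_div, le_div_iff₀ (exp_pos _)]
  linarith

end Decay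

section InnerProductSpace

variable {E : Type*} [NormedAddCommGroup E] [InnerProductSpace ℝ E]

theorem le_inner_map_self_of_norm_sub_le {A B : E →L[ℝ] E} {lam μ : ℝ}
    (hB : ∀ v, lam * ‖v‖ ^ 2 ≤ ⟪v, B v⟫) (hAB : ‖A - B‖ ≤ μ) (v : E) :
    (lam - μ) * ‖v‖ ^ 2 ≤ ⟪v, A v⟫ := by
  have hpert : |⟪v, (A - B) v⟫| ≤ μ * ‖v‖ ^ 2 :=
    calc |⟪v, (A - B) v⟫| ≤ ‖v‖ * ‖(A - B) v‖ := abs_real_inner_le_norm _ _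
      _ ≤ ‖v‖ * (‖A - B‖ * ‖v‖) := by gcongr; exact (A - B).le_opNorm v
      _ ≤ ‖v‖ * (μ * ‖v‖) := by gcongr
      _ = μ * ‖v‖ ^ 2 := by ring
  have hsplit : ⟪v, A v⟫ = ⟪v, B v⟫ + ⟪v, (A - B) v⟫ := by
    rw [sub_apply, inner_sub_right]; ring
  linarith [hB v, (abs_le.1 hpert).1]

theorem norm_sq_le_exp_mul_of_hasDerivWithinAt_neg {s : Set ℝ} (hs : Convex ℝ s)
    {u : ℝ → E} {A : ℝ → E → E} {c : ℝ}
    (hu : ∀ t ∈ s, HasDerivWithinAt u (-A t (u t)) s t)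
    (hA : ∀ t ∈ s, ∀ v, c * ‖v‖ ^ 2 ≤ ⟪v, A t v⟫)
    {a t : ℝ} (ha : a ∈ s) (ht : t ∈ s) (hat : a ≤ t) :
    ‖u t‖ ^ 2 ≤ exp (-(2 * c * (t - a))) * ‖u a‖ ^ 2 := by
  refine le_exp_mul_of_hasDerivWithinAt_le_neg_mul hs (fun t ht => (hu t ht).norm_sq)
    (fun t ht => ?_) ha ht hat
  have := hA t (interior_subset ht) (u t)
  rw [inner_neg_right]
  linarith

end InnerProductSpace

theorem stmt_4_general (n : ℕ) (T lam : ℝ)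
    (y : EuclideanSpace ℝ (Fin n))
    (K : ℝ → Matrix (Fin n) (Fin n) ℝ)
    (hK0pos : ∀ v : EuclideanSpace ℝ (Fin n),
      lam * ‖v‖ ^ 2 ≤ ⟪v, Matrix.toEuclideanLin (K 0) v⟫)
    (hKclose : ∀ t ∈ Set.Icc (0 : ℝ) T,
      ‖LinearMap.toContinuousLinearMap (Matrix.toEuclideanLin (K t - K 0))‖ ≤ lam / 2)
    (f : ℝ → EuclideanSpace ℝ (Fin n))
    (hf : ∀ t ∈ Set.Icc (0 : ℝ) T,
      HasDerivWithinAt f (-(1 / n : ℝ) • Matrix.toEuclideanLin (K t) (f t - y))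
        (Set.Icc 0 T) t) :
    ∀ t ∈ Set.Icc (0 : ℝ) T,
      ‖f t - y‖ ^ 2 ≤ Real.exp (-(lam * t) / (2 * n)) * ‖f 0 - y‖ ^ 2 := by
  -- `λ/(4n)` rather than the available `λ/(2n)`: the claimed rate is only `2 · λ/(4n)`.
  have hcoercive : ∀ τ ∈ Icc (0 : ℝ) T, ∀ v : EuclideanSpace ℝ (Fin n),
      lam / (4 * n) * ‖v‖ ^ 2 ≤ ⟪v, (1 / n : ℝ) • Matrix.toEuclideanLin (K τ) v⟫ := by
    intro τ hτ v
    have hlam_nonneg : 0 ≤ lam := by linarith [(norm_nonneg _).trans (hKclose τ hτ)]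
    have hKτ := le_inner_map_self_of_norm_sub_le
      (A := (Matrix.toEuclideanLin (K τ)).toContinuousLinearMap)
      (B := (Matrix.toEuclideanLin (K 0)).toContinuousLinearMap)
      (by simpa using hK0pos) (by simpa only [map_sub] using hKclose τ hτ) v
    rw [real_inner_smul_right]
    calc lam / (4 * n) * ‖v‖ ^ 2 = 1 / n * (lam / 4 * ‖v‖ ^ 2) := by ring
      _ ≤ 1 / n * ((lam - lam / 2) * ‖v‖ ^ 2) := by gcongr; linarith
      _ ≤ 1 / n * ⟪v, Matrix.toEuclideanLin (K τ) v⟫ := by gcongr; simpa using hKτ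
  intro t ht
  have hdecay := norm_sq_le_exp_mul_of_hasDerivWithinAt_neg (convex_Icc 0 T)
    (fun τ hτ => by simpa only [neg_smul] using (hf τ hτ).sub_const y) hcoercive
    (left_mem_Icc.2 (ht.1.trans ht.2)) ht ht.1
  convert hdecay using 3
  ring

/-- Linear convergence under an initial spectral gap with a kernel staying
`λ/2`-close (in operator norm) to its initial value: if `K : [0,T] →` (symmetric n×n
matrices) is continuous, `vᵀ K(0) v ≥ λ ‖v‖₂²` for all `v`, `‖K(t) - K(0)‖_op ≤ λ/2` on
`[0,T]`, and `f'(t) = -(1/n) K(t)(f(t) - y)`, then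
`‖f(t) - y‖₂² ≤ exp(-λ t/(2n)) ‖f(0) - y‖₂²` on `[0,T]`. -/
theorem stmt_4 (n : ℕ) (hn : 1 ≤ n) (T lam : ℝ) (hT : 0 < T) (hlam : 0 < lam)
    (y : EuclideanSpace ℝ (Fin n))
    (K : ℝ → Matrix (Fin n) (Fin n) ℝ)
    (hKsymm : ∀ t ∈ Set.Icc (0 : ℝ) T, (K t).IsSymm)
    (hKcont : ContinuousOn K (Set.Icc 0 T))
    (hK0pos : ∀ v : EuclideanSpace ℝ (Fin n),
      lam * ‖v‖ ^ 2 ≤ ⟪v, Matrix.toEuclideanLin (K 0) v⟫)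
    (hKclose : ∀ t ∈ Set.Icc (0 : ℝ) T,
      ‖LinearMap.toContinuousLinearMap (Matrix.toEuclideanLin (K t - K 0))‖ ≤ lam / 2)
    (f : ℝ → EuclideanSpace ℝ (Fin n))
    (hf : ∀ t ∈ Set.Icc (0 : ℝ) T,
      HasDerivWithinAt f (-(1 / n : ℝ) • Matrix.toEuclideanLin (K t) (f t - y))
        (Set.Icc 0 T) t) :
    ∀ t ∈ Set.Icc (0 : ℝ) T,
      ‖f t - y‖ ^ 2 ≤ Real.exp (-(lam * t) / (2 * n)) * ‖f 0 - y‖ ^ 2 :=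
  stmt_4_general n T lam y K hK0pos hKclose f hf
end

section
/- Comparison theorem for higher-order differential inequalities: let p ≥ 0 be an integer, T > 0, and let F : ℝ → ℝ be nondecreasing. Suppose ξ, φ : [0,T] → ℝ are (p+1)-times continuously differentiable, with ξ^{(p+1)}(t) ≤ F(ξ(t)) and φ^{(p+1)}(t) ≥ F(φ(t)) for all t ∈ [0,T], and ξ^{(r)}(0) < φ^{(r)}(0) for every 0 ≤ r ≤ p. Then ξ(t) ≤ φ(t) for all t ∈ [0,T]. -/
/-! Put `g r = φ^{(r)} - ξ^{(r)}`; the functions `g 0, …, g p` all start positive. Up to the first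
time `t₀` at which one of them stops being positive, `g 0 > 0` gives `F ∘ ξ ≤ F ∘ φ` and hence
`g (p + 1) ≥ 0`, while `g (r + 1) > 0` for `r < p`. So every `g r` with `r ≤ p` is nondecreasing
on `[0, t₀]` and `g r t₀ ≥ g r 0 > 0`, contradicting the choice of `t₀`. -/

open Set Topology

theorem ContDiffOn.hasDerivAt_iteratedDerivWithin {𝕜 F : Type*} [NontriviallyNormedField 𝕜]
    [NormedAddCommGroup F] [NormedSpace 𝕜 F] {f : 𝕜 → F} {s : Set 𝕜} {n : WithTop ℕ∞} {r : ℕ}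
    {x : 𝕜} (hf : ContDiffOn 𝕜 n f s) (hrn : r < n) (hs : UniqueDiffOn 𝕜 s) (hx : s ∈ 𝓝 x) :
    HasDerivAt (iteratedDerivWithin r f s) (iteratedDerivWithin (r + 1) f s x) x := by
  rw [iteratedDerivWithin_succ, derivWithin_of_mem_nhds hx]
  exact ((hf.differentiableOn_iteratedDerivWithin hrn hs x (mem_of_mem_nhds hx)).differentiableAt
    hx).hasDerivAt

section DerivativeChain

variable {p : ℕ} {a b : ℝ} {g : ℕ → ℝ → ℝ}

theorem monotoneOn_of_derivative_chain_pos
    (hcont : ∀ r ≤ p, ContinuousOn (g r) (Icc a b))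
    (hderiv : ∀ r ≤ p, ∀ t ∈ Ioo a b, HasDerivAt (g r) (g (r + 1) t) t)
    (htop : ∀ t ∈ Ioo a b, (∀ r ≤ p, 0 < g r t) → 0 ≤ g (p + 1) t)
    {c : ℝ} (hcb : c ≤ b) (hpos : ∀ t ∈ Ioo a c, ∀ r ≤ p, 0 < g r t) {r : ℕ} (hr : r ≤ p) :
    MonotoneOn (g r) (Icc a c) := by
  have hsub : Ioo a c ⊆ Ioo a b := Ioo_subset_Ioo_right hcb
  refine monotoneOn_of_hasDerivWithinAt_nonneg (convex_Icc a c)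
    ((hcont r hr).mono (Icc_subset_Icc_right hcb))
    (fun t ht ↦ (hderiv r hr t (hsub (by rwa [interior_Icc] at ht))).hasDerivWithinAt) fun t ht ↦ ?_
  rw [interior_Icc] at ht
  rcases hr.lt_or_eq with hlt | rfl
  · exact (hpos t ht (r + 1) hlt).le
  · exact htop t (hsub ht) (hpos t ht)

theorem pos_of_derivative_chain
    (hcont : ∀ r ≤ p, ContinuousOn (g r) (Icc a b))
    (hderiv : ∀ r ≤ p, ∀ t ∈ Ioo a b, HasDerivAt (g r) (g (r + 1) t) t)
    (htop : ∀ t ∈ Ioo a b, (∀ r ≤ p, 0 < g r t) → 0 ≤ g (p + 1) t)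
    (hinit : ∀ r ≤ p, 0 < g r a) :
    ∀ t ∈ Icc a b, ∀ r ≤ p, 0 < g r t := by
  set B := ⋃ r ∈ Iic p, Icc a b ∩ g r ⁻¹' Iic 0
  have hmemB : ∀ t, t ∈ B ↔ t ∈ Icc a b ∧ ∃ r ≤ p, g r t ≤ 0 := by
    intro t
    simp only [B, mem_iUnion, mem_inter_iff, mem_preimage, mem_Iic, exists_prop]
    tauto
  by_contra! ⟨t, ht, r, hr, hgt⟩
  have hBne : B.Nonempty := ⟨t, (hmemB t).2 ⟨ht, r, hr, hgt⟩⟩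
  have hBbdd : BddBelow B := ⟨a, fun t ht ↦ ((hmemB t).1 ht).1.1⟩
  have hBclosed : IsClosed B := (finite_Iic p).isClosed_biUnion fun r hr ↦
    (hcont r hr).preimage_isClosed_of_isClosed isClosed_Icc isClosed_Iic
  obtain ⟨⟨hat₀, ht₀b⟩, r₀, hr₀, hgt₀⟩ := (hmemB _).1 (hBclosed.csInf_mem hBne hBbdd)
  have hpos : ∀ t ∈ Ioo a (sInf B), ∀ r ≤ p, 0 < g r t := by
    intro t ht r hr
    by_contra! hle
    have htB : t ∈ B := (hmemB t).2 ⟨⟨ht.1.le, ht.2.le.trans ht₀b⟩, r, hr, hle⟩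
    exact (csInf_le hBbdd htB).not_gt ht.2
  have hmono := monotoneOn_of_derivative_chain_pos hcont hderiv htop ht₀b hpos hr₀
  have := hmono (left_mem_Icc.2 hat₀) (right_mem_Icc.2 hat₀) hat₀
  linarith [hinit r₀ hr₀]

end DerivativeChain

/-- Comparison theorem for higher-order differential inequalities: if `F`
is nondecreasing, `ξ` and `φ` are `(p+1)`-times continuously differentiable on `[0,T]` with
`ξ^{(p+1)}(t) ≤ F(ξ(t))`, `φ^{(p+1)}(t) ≥ F(φ(t))` on `[0,T]`, and `ξ^{(r)}(0) < φ^{(r)}(0)`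
for every `0 ≤ r ≤ p`, then `ξ(t) ≤ φ(t)` for all `t ∈ [0,T]`. -/
theorem stmt_7 (p : ℕ) (T : ℝ) (hT : 0 < T) (F : ℝ → ℝ) (hF : Monotone F)
    (ξ φ : ℝ → ℝ)
    (hξ : ContDiffOn ℝ (p + 1) ξ (Set.Icc 0 T))
    (hφ : ContDiffOn ℝ (p + 1) φ (Set.Icc 0 T))
    (hξineq : ∀ t ∈ Set.Icc (0 : ℝ) T,
      iteratedDerivWithin (p + 1) ξ (Set.Icc 0 T) t ≤ F (ξ t))
    (hφineq : ∀ t ∈ Set.Icc (0 : ℝ) T,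
      F (φ t) ≤ iteratedDerivWithin (p + 1) φ (Set.Icc 0 T) t)
    (h0 : ∀ r : ℕ, r ≤ p →
      iteratedDerivWithin r ξ (Set.Icc 0 T) 0 < iteratedDerivWithin r φ (Set.Icc 0 T) 0) :
    ∀ t ∈ Set.Icc (0 : ℝ) T, ξ t ≤ φ t := by
  have hs : UniqueDiffOn ℝ (Icc 0 T) := uniqueDiffOn_Icc hT
  set g : ℕ → ℝ → ℝ := fun r ↦ iteratedDerivWithin r φ (Icc 0 T) - iteratedDerivWithin r ξ (Icc 0 T)
  have hg₀ : ∀ t, g 0 t = φ t - ξ t := fun t ↦ by simp [g]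
  have hcont : ∀ r ≤ p, ContinuousOn (g r) (Icc 0 T) := fun r hr ↦
    have hrp : (r : WithTop ℕ∞) ≤ p + 1 := by exact_mod_cast hr.trans p.le_succ
    (hφ.continuousOn_iteratedDerivWithin hrp hs).sub (hξ.continuousOn_iteratedDerivWithin hrp hs)
  have hderiv : ∀ r ≤ p, ∀ t ∈ Ioo 0 T, HasDerivAt (g r) (g (r + 1) t) t := fun r hr t ht ↦
    have hrp : (r : WithTop ℕ∞) < p + 1 := by exact_mod_cast Nat.lt_succ_of_le hr
    (hφ.hasDerivAt_iteratedDerivWithin hrp hs (Icc_mem_nhds ht.1 ht.2)).sub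
      (hξ.hasDerivAt_iteratedDerivWithin hrp hs (Icc_mem_nhds ht.1 ht.2))
  have htop : ∀ t ∈ Ioo 0 T, (∀ r ≤ p, 0 < g r t) → 0 ≤ g (p + 1) t := by
    intro t ht hgt
    have hFt : F (ξ t) ≤ F (φ t) := hF (sub_pos.1 (hg₀ t ▸ hgt 0 p.zero_le)).le
    have hts := Ioo_subset_Icc_self ht
    show 0 ≤ iteratedDerivWithin (p + 1) φ _ t - iteratedDerivWithin (p + 1) ξ _ t
    linarith [hξineq t hts, hφineq t hts]
  have hpos := pos_of_derivative_chain hcont hderiv htop fun r hr ↦ sub_pos.2 (h0 r hr)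
  intro t ht
  linarith [hg₀ t, hpos t ht 0 p.zero_le]
end

section
/- Grönwall-type bound with a cutoff: let T > 0, κ > 0, let g : [0,T] → ℝ be continuous, nonnegative and nondecreasing, and let Δ : [0,T] → ℝ be differentiable with Δ(t) ≥ 0 for all t, Δ(0) = 0, and Δ'(t) ≤ max{0, g(t) − κ Δ(t)} for all t ∈ [0,T]. Then for every t ∈ [0,T], Δ(t) ≤ min{∫₀ᵗ g(s) ds, g(t)/κ}. -/
/-!
Integrating `Δ' ≤ max 0 (g - κΔ) ≤ g` (using `g, Δ ≥ 0`) from `Δ 0 = 0` gives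
`Δ t ≤ ∫₀ᵗ g`.
For the second bound fix `t`: on `[0, t]` monotonicity gives `g ≤ g t`, so `Δ` cannot increase
while it lies above `g t / κ`, and it starts below that level.
-/

open Set

theorem image_le_of_deriv_right_nonpos_above {f f' : ℝ → ℝ} {a b M : ℝ}
    (hf : ContinuousOn f (Icc a b)) (hf' : ∀ x ∈ Ico a b, HasDerivWithinAt f (f' x) (Ici x) x)
    (ha : f a ≤ M) (bound : ∀ x ∈ Ico a b, M < f x → f' x ≤ 0) :
    ∀ ⦃x⦄, x ∈ Icc a b → f x ≤ M := by
  intro x hx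
  -- The fence `M + ε (x - a + 1)` lies strictly above `M`, so `f` can touch it only where
  -- `f' ≤ 0 < ε`.
  have fence : ∀ ε > 0, f x ≤ M + ε * (x - a + 1) := by
    intro ε hε
    have hB : ∀ y, HasDerivAt (fun y ↦ M + ε * (y - a + 1)) ε y := fun y ↦ by
      simpa using ((((hasDerivAt_id y).sub_const a).add_const 1).const_mul ε).const_add M
    refine image_le_of_deriv_right_lt_deriv_boundary' hf hf' (by linarith)
      (by fun_prop) (fun y _ ↦ (hB y).hasDerivWithinAt) (fun y hy hfy ↦ ?_) hx
    have above : M < f y := by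
      rw [hfy]
      nlinarith [hy.1]
    exact (bound y hy above).trans_lt hε
  have hpos : 0 < x - a + 1 := by linarith [hx.1]
  refine le_of_forall_pos_le_add fun δ hδ ↦ ?_
  simpa [div_mul_cancel₀ _ hpos.ne'] using fence (δ / (x - a + 1)) (by positivity)

theorem stmt_9_general (T κ : ℝ) (hκ : 0 < κ)
    (g : ℝ → ℝ)
    (hgc : ContinuousOn g (Set.Icc 0 T))
    (hg0 : ∀ t ∈ Set.Icc (0 : ℝ) T, 0 ≤ g t)
    (hgmono : MonotoneOn g (Set.Icc 0 T))
    (Δ Δ' : ℝ → ℝ)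
    (hΔderiv : ∀ t ∈ Set.Icc (0 : ℝ) T, HasDerivWithinAt Δ (Δ' t) (Set.Icc 0 T) t)
    (hΔ0 : Δ 0 = 0)
    (hΔpos : ∀ t ∈ Set.Icc (0 : ℝ) T, 0 ≤ Δ t)
    (hineq : ∀ t ∈ Set.Icc (0 : ℝ) T, Δ' t ≤ max 0 (g t - κ * Δ t)) :
    ∀ t ∈ Set.Icc (0 : ℝ) T, Δ t ≤ min (∫ s in (0 : ℝ)..t, g s) (g t / κ) := by
  intro t ht
  have hsub : Icc 0 t ⊆ Icc 0 T := Icc_subset_Icc_right ht.2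
  have hcont : ContinuousOn Δ (Icc 0 t) :=
    fun x hx ↦ (hΔderiv x (hsub hx)).continuousWithinAt.mono hsub
  have hright : ∀ x ∈ Ico 0 t, HasDerivWithinAt Δ (Δ' x) (Ici x) x := fun x hx ↦
    (hΔderiv x (hsub (Ico_subset_Icc_self hx))).mono_of_mem_nhdsWithin
      (Icc_mem_nhdsGE_of_mem (Ico_subset_Ico_right ht.2 hx))
  refine le_min ?_ ?_
  · have hle : ∀ x ∈ Ioo 0 t, Δ' x ≤ g x := fun x hx ↦ by
      have hx' := hsub (Ioo_subset_Icc_self hx)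
      exact (hineq x hx').trans (max_le (hg0 x hx') (by nlinarith [hΔpos x hx']))
    simpa [hΔ0] using intervalIntegral.sub_le_integral_of_hasDeriv_right_of_le ht.1 hcont
      (fun x hx ↦ (hright x (Ioo_subset_Ico_self hx)).Ioi_of_Ici)
      ((hgc.mono hsub).integrableOn_Icc) hle
  · refine image_le_of_deriv_right_nonpos_above hcont hright
      (by simpa [hΔ0] using div_nonneg (hg0 t ht) hκ.le) (fun x hx hΔx ↦ ?_)
      (right_mem_Icc.2 ht.1)
    have hx' := hsub (Ico_subset_Icc_self hx)
    have hgx : g x ≤ g t := hgmono hx' ht hx.2.le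
    have hκΔ : g t < κ * Δ x := by rwa [div_lt_iff₀' hκ] at hΔx
    exact (hineq x hx').trans (max_le le_rfl (by linarith))

/-- Grönwall-type bound with a cutoff: if `g` is continuous, nonnegative
and nondecreasing on `[0,T]`, `Δ ≥ 0`, `Δ(0) = 0` and
`Δ'(t) ≤ max {0, g(t) - κ Δ(t)}` on `[0,T]` with `κ > 0`, then
`Δ(t) ≤ min {∫₀ᵗ g, g(t)/κ}` for every `t ∈ [0,T]`. -/
theorem stmt_9 (T κ : ℝ) (hT : 0 < T) (hκ : 0 < κ)
    (g : ℝ → ℝ)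
    (hgc : ContinuousOn g (Set.Icc 0 T))
    (hg0 : ∀ t ∈ Set.Icc (0 : ℝ) T, 0 ≤ g t)
    (hgmono : MonotoneOn g (Set.Icc 0 T))
    (Δ Δ' : ℝ → ℝ)
    (hΔderiv : ∀ t ∈ Set.Icc (0 : ℝ) T, HasDerivWithinAt Δ (Δ' t) (Set.Icc 0 T) t)
    (hΔ0 : Δ 0 = 0)
    (hΔpos : ∀ t ∈ Set.Icc (0 : ℝ) T, 0 ≤ Δ t)
    (hineq : ∀ t ∈ Set.Icc (0 : ℝ) T, Δ' t ≤ max 0 (g t - κ * Δ t)) :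
    ∀ t ∈ Set.Icc (0 : ℝ) T, Δ t ≤ min (∫ s in (0 : ℝ)..t, g s) (g t / κ) :=
  stmt_9_general T κ hκ g hgc hg0 hgmono Δ Δ' hΔderiv hΔ0 hΔpos hineq
end

section
/- Stability of kernel gradient descent under kernel perturbation: let n ≥ 1, T > 0, λ > 0, ε ≥ 0, R ≥ 0, y ∈ ℝⁿ. Let K, K̃ : [0,T] → (n×n real matrices) be continuous with vᵀ K(t) v ≥ (λ/2) ‖v‖₂² for all v ∈ ℝⁿ and all t, and ‖K(t) − K̃(t)‖_{op} ≤ ε for all t ∈ [0,T]. Let f, f̃ : [0,T] → ℝⁿ be differentiable with f'(t) = −(1/n) K(t)(f(t) − y), f̃'(t) = −(1/n) K̃(t)(f̃(t) − y), f(0) = f̃(0), and suppose ‖f̃(t) − y‖₂ ≤ R for all t ∈ [0,T]. Then for every t ∈ [0,T], ‖f(t) − f̃(t)‖₂ ≤ (ε R / n) · min{t, 2n/λ}. -/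
/-!
The squared distance `u = ‖f - f̃‖²` satisfies `u' ≤ 2 (εR/n) √u - (λ/n) u`: the kernel `K`
dissipates `f - f̃` at rate `λ/2`, while the kernel mismatch `K - K̃` acting on `f̃ - y` contributes
at most `εR`. Comparing `√u` with strict barriers and passing to the limit, `√u` stays below the
solution `v = (2εR/λ)(1 - exp (-λt/(2n)))` of `v' = εR/n - (λ/(2n)) v`, `v 0 = 0`, and
`1 - e^{-x} ≤ min x 1` gives the bound.
-/

open scoped RealInnerProductSpace
open Set Real Filter Topology

/-- The solution of `v' = c - k v` with `v 0 = v₀`. -/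
noncomputable def relaxation (c k v₀ t : ℝ) : ℝ :=
  c / k + (v₀ - c / k) * exp (-k * t)

theorem hasDerivAt_relaxation {c k : ℝ} (hk : k ≠ 0) (v₀ t : ℝ) :
    HasDerivAt (relaxation c k v₀) (c - k * relaxation c k v₀ t) t := by
  have := (((hasDerivAt_id' t).const_mul (-k)).exp.const_mul (v₀ - c / k)).const_add (c / k)
  refine this.congr_deriv ?_
  unfold relaxation
  field_simp
  ring

theorem relaxation_pos {c k v₀ t : ℝ} (hc : 0 ≤ c) (hk : 0 < k) (hv₀ : 0 < v₀) (ht : 0 ≤ t) :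
    0 < relaxation c k v₀ t := by
  have hexp : exp (-k * t) ≤ 1 := exp_le_one_iff.2 (by nlinarith)
  have hck : 0 ≤ c / k := by positivity
  have hexp_pos := exp_pos (-k * t)
  unfold relaxation
  nlinarith

theorem relaxation_zero_le {c k t : ℝ} (hc : 0 ≤ c) (hk : 0 < k) :
    relaxation c k 0 t ≤ c * min t (1 / k) := by
  have hck : 0 ≤ c / k := by positivity
  have hlin : 1 - exp (-k * t) ≤ k * t := by linarith [add_one_le_exp (-k * t)]
  rw [mul_min_of_nonneg _ _ hc, le_min_iff]
  unfold relaxation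
  constructor
  · calc c / k + (0 - c / k) * exp (-k * t) = c / k * (1 - exp (-k * t)) := by ring
      _ ≤ c / k * (k * t) := mul_le_mul_of_nonneg_left hlin hck
      _ = c * t := by field_simp
  · rw [mul_one_div]
    nlinarith [exp_pos (-k * t)]

theorem inner_sub_apply_sub_le {E : Type*} [NormedAddCommGroup E] [InnerProductSpace ℝ E]
    (A B : E →ₗ[ℝ] E) {μ ε R : ℝ} (hε : 0 ≤ ε) (hA : ∀ v, μ * ‖v‖ ^ 2 ≤ ⟪v, A v⟫)
    (hAB : ∀ v, ‖A v - B v‖ ≤ ε * ‖v‖) {p q : E} (hq : ‖q‖ ≤ R) :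
    ⟪p - q, B q - A p⟫ ≤ ‖p - q‖ * (ε * R - μ * ‖p - q‖) := by
  have hsplit : B q - A p = -A (p - q) + -(A q - B q) := by rw [map_sub]; abel
  have hpert : ‖A q - B q‖ ≤ ε * R :=
    (hAB q).trans (mul_le_mul_of_nonneg_left hq hε)
  have hcs := real_inner_le_norm (p - q) (-(A q - B q))
  rw [norm_neg] at hcs
  rw [hsplit, inner_add_right, inner_neg_right]
  nlinarith [hA (p - q), mul_le_mul_of_nonneg_left hpert (norm_nonneg (p - q))]

section Comparison

variable {w d : ℝ → ℝ} {T c k : ℝ}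

theorem le_relaxation_of_lt {c' v₀ : ℝ} (hc' : 0 ≤ c') (hcc' : c < c') (hk : 0 < k)
    (hw : ∀ t ∈ Icc 0 T, 0 ≤ w t) (hv₀ : w 0 < v₀)
    (hd : ∀ t ∈ Icc 0 T, HasDerivWithinAt (fun s => w s ^ 2) (d t) (Icc 0 T) t)
    (hdw : ∀ t ∈ Ico 0 T, d t ≤ 2 * w t * (c - k * w t)) :
    ∀ t ∈ Icc 0 T, w t ≤ relaxation c' k v₀ t := by
  intro t ht
  have hw0 : 0 ≤ w 0 := hw 0 ⟨le_rfl, ht.1.trans ht.2⟩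
  set v := relaxation c' k v₀
  have hv : ∀ s, 0 ≤ s → 0 < v s := fun s hs => relaxation_pos hc' hk (hw0.trans_lt hv₀) hs
  -- `v ^ 2` is a strict upper barrier for `w ^ 2`: at a contact point `w = v > 0` and `c < c'`.
  have hsq : w t ^ 2 ≤ v t ^ 2 := by
    refine image_le_of_deriv_right_lt_deriv_boundary (fun s hs => (hd s hs).continuousWithinAt)
      (fun s hs => (hd s (Ico_subset_Icc_self hs)).mono_of_mem_nhdsWithin
        (Icc_mem_nhdsGE_of_mem hs))
      (by simpa [v, relaxation] using pow_le_pow_left₀ hw0 hv₀.le 2)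
      (fun s => ((hasDerivAt_relaxation hk.ne' v₀ s).pow 2)) ?_ ht
    intro s hs hcontact
    have hvs := hv s hs.1
    have hws : w s = v s :=
      (pow_left_inj₀ (hw s (Ico_subset_Icc_self hs)) hvs.le two_ne_zero).1 hcontact
    calc d s ≤ 2 * v s * (c - k * v s) := hws ▸ hdw s hs
      _ < 2 * v s * (c' - k * v s) := by gcongr
      _ = _ := by ring
  exact (pow_le_pow_iff_left₀ (hw t ht) (hv t ht.1).le two_ne_zero).1 hsq

theorem le_relaxation (hc : 0 ≤ c) (hk : 0 < k) (hw : ∀ t ∈ Icc 0 T, 0 ≤ w t)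
    (hd : ∀ t ∈ Icc 0 T, HasDerivWithinAt (fun s => w s ^ 2) (d t) (Icc 0 T) t)
    (hdw : ∀ t ∈ Ico 0 T, d t ≤ 2 * w t * (c - k * w t)) :
    ∀ t ∈ Icc 0 T, w t ≤ relaxation c k (w 0) t := by
  intro t ht
  have hlim : Tendsto (fun δ => relaxation (c + δ) k (w 0 + δ) t) (𝓝[>] 0)
      (𝓝 (relaxation c k (w 0) t)) := by
    have hcont : Continuous fun δ => relaxation (c + δ) k (w 0 + δ) t := by
      unfold relaxation; fun_prop
    simpa using hcont.continuousWithinAt.tendsto (x := 0) (s := Ioi 0)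
  refine ge_of_tendsto hlim (eventually_nhdsWithin_of_forall fun δ (hδ : 0 < δ) => ?_)
  exact le_relaxation_of_lt (by positivity) (by linarith) hk hw (by linarith) hd hdw t ht

end Comparison

theorem stmt_11_general (n : ℕ) (hn : 1 ≤ n) (T lam ε R : ℝ)
    (hlam : 0 < lam) (hε : 0 ≤ ε) (hR : 0 ≤ R)
    (y : EuclideanSpace ℝ (Fin n))
    (K K' : ℝ → Matrix (Fin n) (Fin n) ℝ)
    (hKpos : ∀ t ∈ Set.Icc (0 : ℝ) T, ∀ v : EuclideanSpace ℝ (Fin n),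
      lam / 2 * ‖v‖ ^ 2 ≤ ⟪v, Matrix.toEuclideanLin (K t) v⟫)
    (hclose : ∀ t ∈ Set.Icc (0 : ℝ) T,
      ‖LinearMap.toContinuousLinearMap (Matrix.toEuclideanLin (K t - K' t))‖ ≤ ε)
    (f g : ℝ → EuclideanSpace ℝ (Fin n))
    (hf : ∀ t ∈ Set.Icc (0 : ℝ) T,
      HasDerivWithinAt f (-(1 / n : ℝ) • Matrix.toEuclideanLin (K t) (f t - y))
        (Set.Icc 0 T) t)
    (hg : ∀ t ∈ Set.Icc (0 : ℝ) T,
      HasDerivWithinAt g (-(1 / n : ℝ) • Matrix.toEuclideanLin (K' t) (g t - y))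
        (Set.Icc 0 T) t)
    (h0 : f 0 = g 0)
    (hgbound : ∀ t ∈ Set.Icc (0 : ℝ) T, ‖g t - y‖ ≤ R) :
    ∀ t ∈ Set.Icc (0 : ℝ) T, ‖f t - g t‖ ≤ ε * R / n * min t (2 * n / lam) := by
  have hn0 : (0 : ℝ) < n := Nat.cast_pos.2 hn
  have hpert : ∀ t ∈ Icc 0 T, ∀ v, ‖Matrix.toEuclideanLin (K t) v -
      Matrix.toEuclideanLin (K' t) v‖ ≤ ε * ‖v‖ := fun t ht v => by
    simpa [map_sub] using ((Matrix.toEuclideanLin (K t - K' t)).toContinuousLinearMap.le_opNorm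
      v).trans (mul_le_mul_of_nonneg_right (hclose t ht) (norm_nonneg v))
  have hdiss : ∀ t ∈ Icc 0 T, 2 * ⟪f t - g t, -(1 / n : ℝ) • Matrix.toEuclideanLin (K t) (f t - y)
      - -(1 / n : ℝ) • Matrix.toEuclideanLin (K' t) (g t - y)⟫ ≤
      2 * ‖f t - g t‖ * (ε * R / n - lam / (2 * n) * ‖f t - g t‖) := by
    intro t ht
    have hinner := inner_sub_apply_sub_le _ _ hε (hKpos t ht) (hpert t ht) (p := f t - y)
      (hgbound t ht)
    rw [sub_sub_sub_cancel_right] at hinner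
    rw [← smul_sub, real_inner_smul_right, ← neg_sub (Matrix.toEuclideanLin (K' t) (g t - y)),
      inner_neg_right]
    linear_combination (2 / (n : ℝ)) * hinner
  intro t ht
  calc ‖f t - g t‖ ≤ relaxation (ε * R / n) (lam / (2 * n)) ‖f 0 - g 0‖ t :=
        le_relaxation (w := fun s => ‖f s - g s‖) (by positivity) (by positivity)
          (fun _ _ => norm_nonneg _) (fun s hs => ((hf s hs).sub (hg s hs)).norm_sq)
          (fun s hs => hdiss s (Ico_subset_Icc_self hs)) t ht
    _ ≤ ε * R / n * min t (1 / (lam / (2 * n))) := by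
      rw [h0, sub_self, norm_zero]
      exact relaxation_zero_le (by positivity) (by positivity)
    _ = ε * R / n * min t (2 * n / lam) := by rw [one_div_div]

/-- Stability of kernel gradient descent under kernel perturbation: if
`vᵀ K(t) v ≥ (λ/2)‖v‖₂²`, `‖K(t) - K̃(t)‖_op ≤ ε` on `[0,T]`,
`f' = -(1/n) K (f - y)`, `f̃' = -(1/n) K̃ (f̃ - y)`, `f(0) = f̃(0)`, and
`‖f̃(t) - y‖₂ ≤ R` on `[0,T]`, then `‖f(t) - f̃(t)‖₂ ≤ (ε R / n) min{t, 2n/λ}`. -/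
theorem stmt_11 (n : ℕ) (hn : 1 ≤ n) (T lam ε R : ℝ)
    (hT : 0 < T) (hlam : 0 < lam) (hε : 0 ≤ ε) (hR : 0 ≤ R)
    (y : EuclideanSpace ℝ (Fin n))
    (K K' : ℝ → Matrix (Fin n) (Fin n) ℝ)
    (hKcont : ContinuousOn K (Set.Icc 0 T))
    (hK'cont : ContinuousOn K' (Set.Icc 0 T))
    (hKpos : ∀ t ∈ Set.Icc (0 : ℝ) T, ∀ v : EuclideanSpace ℝ (Fin n),
      lam / 2 * ‖v‖ ^ 2 ≤ ⟪v, Matrix.toEuclideanLin (K t) v⟫)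
    (hclose : ∀ t ∈ Set.Icc (0 : ℝ) T,
      ‖LinearMap.toContinuousLinearMap (Matrix.toEuclideanLin (K t - K' t))‖ ≤ ε)
    (f g : ℝ → EuclideanSpace ℝ (Fin n))
    (hf : ∀ t ∈ Set.Icc (0 : ℝ) T,
      HasDerivWithinAt f (-(1 / n : ℝ) • Matrix.toEuclideanLin (K t) (f t - y))
        (Set.Icc 0 T) t)
    (hg : ∀ t ∈ Set.Icc (0 : ℝ) T,
      HasDerivWithinAt g (-(1 / n : ℝ) • Matrix.toEuclideanLin (K' t) (g t - y))
        (Set.Icc 0 T) t)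
    (h0 : f 0 = g 0)
    (hgbound : ∀ t ∈ Set.Icc (0 : ℝ) T, ‖g t - y‖ ≤ R) :
    ∀ t ∈ Set.Icc (0 : ℝ) T, ‖f t - g t‖ ≤ ε * R / n * min t (2 * n / lam) :=
  stmt_11_general n hn T lam ε R hlam hε hR y K K' hKpos hclose f g hf hg h0 hgbound
end

section
/- Slow variation of the neural tangent kernel from the hierarchy (abstract form of Corollary 2.2): let n ≥ 1, T > 0, B ≥ 0, C₀ ≥ 0, y ∈ ℝⁿ, and let f : [0,T] → ℝⁿ satisfy (1/n) ∑_{β} (f_β(t) − y_β)² ≤ C₀ for all t ∈ [0,T]. Let K² : [0,T] → ((Fin n)² → ℝ), K³ : [0,T] → ((Fin n)³ → ℝ) and K⁴ : [0,T] → ((Fin n)⁴ → ℝ) be differentiable in t and satisfy, for all indices and all t: d/dt K²(t)(α₁,α₂) = −(1/n) ∑_{β} K³(t)(α₁,α₂,β)(f_β(t) − y_β) and d/dt K³(t)(α₁,α₂,α₃) = −(1/n) ∑_{β} K⁴(t)(α₁,α₂,α₃,β)(f_β(t) − y_β). If max over indices |K³(0)(α₁,α₂,α₃)| ≤ B and max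 over indices |K⁴(t)(α₁,α₂,α₃,α₄)| ≤ B for all t ∈ [0,T], then for every t ∈ [0,T] and all α₁, α₂, one has |d/dt K²(t)(α₁,α₂)| ≤ B √C₀ (1 + √C₀ t). -/
/-! By Cauchy–Schwarz, the mean of `a β (f_β(t) - y_β)` is at most `max_β |a β| · √C₀`.
Applied to `K⁴` this bounds `d/dt K³` by `B √C₀`, so the mean value inequality gives
`|K³(t)| ≤ B + B √C₀ t`; applied to `K³(t)` it then bounds `d/dt K²(t)`. -/

open Finset

theorem sq_mean_mul_le_mean_sq_mul_mean_sq {ι : Type*} [Fintype ι] (a e : ι → ℝ) :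
    ((1 / Fintype.card ι : ℝ) * ∑ i, a i * e i) ^ 2 ≤
      ((1 / Fintype.card ι : ℝ) * ∑ i, a i ^ 2) * ((1 / Fintype.card ι : ℝ) * ∑ i, e i ^ 2) := by
  have hcs := sum_mul_sq_le_sq_mul_sq univ a e
  calc ((1 / Fintype.card ι : ℝ) * ∑ i, a i * e i) ^ 2
      = (1 / Fintype.card ι : ℝ) ^ 2 * (∑ i, a i * e i) ^ 2 := by ring
    _ ≤ (1 / Fintype.card ι : ℝ) ^ 2 * ((∑ i, a i ^ 2) * ∑ i, e i ^ 2) := by gcongr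
    _ = _ := by ring

theorem abs_mean_mul_le {ι : Type*} [Fintype ι] {a e : ι → ℝ} {M C : ℝ} (hM : 0 ≤ M)
    (ha : ∀ i, |a i| ≤ M) (he : (1 / Fintype.card ι : ℝ) * ∑ i, e i ^ 2 ≤ C) :
    |(1 / Fintype.card ι : ℝ) * ∑ i, a i * e i| ≤ M * √C := by
  have hmean_a : (1 / Fintype.card ι : ℝ) * ∑ i, a i ^ 2 ≤ M ^ 2 := by
    calc (1 / Fintype.card ι : ℝ) * ∑ i, a i ^ 2
        ≤ (1 / Fintype.card ι : ℝ) * ∑ _i : ι, M ^ 2 := by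
          gcongr ?_ * ?_
          exact sum_le_sum fun i _ => sq_le_sq' (abs_le.1 (ha i)).1 (abs_le.1 (ha i)).2
      _ ≤ M ^ 2 := by
          rw [sum_const, card_univ, nsmul_eq_mul, ← mul_assoc, one_div_mul_eq_div]
          exact mul_le_of_le_one_left (sq_nonneg M) (div_self_le_one _)
  rw [← Real.sqrt_sq hM, ← Real.sqrt_mul (sq_nonneg M)]
  refine Real.abs_le_sqrt ((sq_mean_mul_le_mean_sq_mul_mean_sq a e).trans ?_)
  exact mul_le_mul hmean_a he (by positivity) (sq_nonneg M)

theorem norm_le_norm_zero_add_mul_of_hasDerivWithinAt_Icc {E : Type*} [NormedAddCommGroup E]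
    [NormedSpace ℝ E] {g g' : ℝ → E} {T L t : ℝ}
    (hg : ∀ x ∈ Set.Icc 0 T, HasDerivWithinAt g (g' x) (Set.Icc 0 T) x)
    (hg' : ∀ x ∈ Set.Icc 0 T, ‖g' x‖ ≤ L) (ht : t ∈ Set.Icc 0 T) :
    ‖g t‖ ≤ ‖g 0‖ + L * t := by
  have hincr := (convex_Icc 0 T).norm_image_sub_le_of_norm_hasDerivWithin_le hg hg'
    (Set.left_mem_Icc.2 (ht.1.trans ht.2)) ht
  rw [sub_zero, Real.norm_of_nonneg ht.1] at hincr
  calc ‖g t‖ = ‖g 0 + (g t - g 0)‖ := by rw [add_sub_cancel]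
    _ ≤ ‖g 0‖ + L * t := (norm_add_le _ _).trans (by gcongr)

theorem stmt_13_general (n : ℕ) (T B C₀ : ℝ)
    (hB : 0 ≤ B)
    (y : Fin n → ℝ) (f : ℝ → Fin n → ℝ)
    (hf : ∀ t ∈ Set.Icc (0 : ℝ) T, (1 / n) * ∑ β, (f t β - y β) ^ 2 ≤ C₀)
    (K3 : ℝ → Fin n → Fin n → Fin n → ℝ)
    (K4 : ℝ → Fin n → Fin n → Fin n → Fin n → ℝ)
    (dK2 : ℝ → Fin n → Fin n → ℝ)
    (hdK2 : ∀ t ∈ Set.Icc (0 : ℝ) T, ∀ α₁ α₂,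
      dK2 t α₁ α₂ = -(1 / n) * ∑ β, K3 t α₁ α₂ β * (f t β - y β))
    (hK3deriv : ∀ t ∈ Set.Icc (0 : ℝ) T, ∀ α₁ α₂ α₃,
      HasDerivWithinAt (fun s => K3 s α₁ α₂ α₃)
        (-(1 / n) * ∑ β, K4 t α₁ α₂ α₃ β * (f t β - y β)) (Set.Icc 0 T) t)
    (hK30 : ∀ α₁ α₂ α₃, |K3 0 α₁ α₂ α₃| ≤ B)
    (hK4 : ∀ t ∈ Set.Icc (0 : ℝ) T, ∀ α₁ α₂ α₃ α₄, |K4 t α₁ α₂ α₃ α₄| ≤ B) :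
    ∀ t ∈ Set.Icc (0 : ℝ) T, ∀ α₁ α₂,
      |dK2 t α₁ α₂| ≤ B * Real.sqrt C₀ * (1 + Real.sqrt C₀ * t) := by
  have hmean : ∀ t ∈ Set.Icc (0 : ℝ) T, ∀ {a : Fin n → ℝ} {M : ℝ}, 0 ≤ M → (∀ β, |a β| ≤ M) →
      |-(1 / n : ℝ) * ∑ β, a β * (f t β - y β)| ≤ M * √C₀ := fun t ht a M hM ha => by
    rw [neg_mul, abs_neg]
    simpa only [Fintype.card_fin] using abs_mean_mul_le hM ha (e := fun β => f t β - y β)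
      (by simpa only [Fintype.card_fin] using hf t ht)
  intro t ht α₁ α₂
  have hK3 : ∀ α₃, |K3 t α₁ α₂ α₃| ≤ B + B * √C₀ * t := fun α₃ =>
    (norm_le_norm_zero_add_mul_of_hasDerivWithinAt_Icc (fun x hx => hK3deriv x hx α₁ α₂ α₃)
      (fun x hx => hmean x hx hB (hK4 x hx α₁ α₂ α₃)) ht).trans
      (by gcongr; exact hK30 α₁ α₂ α₃)
  calc |dK2 t α₁ α₂| ≤ (B + B * √C₀ * t) * √C₀ := by
        rw [hdK2 t ht]
        exact hmean t ht (by have := ht.1; positivity) hK3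
    _ = B * √C₀ * (1 + √C₀ * t) := by ring

/-- Slow variation of the neural tangent kernel from the hierarchy
(abstract form of Corollary 2.2): if `(1/n) ∑_β (f_β(t) - y_β)² ≤ C₀` on `[0,T]`, the
kernels satisfy the hierarchy ODEs
`d/dt K²(t) = -(1/n) ∑_β K³(t)(·,·,β)(f_β - y_β)` and
`d/dt K³(t) = -(1/n) ∑_β K⁴(t)(·,·,·,β)(f_β - y_β)`, `|K³(0)| ≤ B` entrywise, and
`|K⁴(t)| ≤ B` entrywise on `[0,T]`, then `|d/dt K²(t)| ≤ B √C₀ (1 + √C₀ t)` on `[0,T]`. -/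
theorem stmt_13 (n : ℕ) (hn : 1 ≤ n) (T B C₀ : ℝ)
    (hT : 0 < T) (hB : 0 ≤ B) (hC₀ : 0 ≤ C₀)
    (y : Fin n → ℝ) (f : ℝ → Fin n → ℝ)
    (hf : ∀ t ∈ Set.Icc (0 : ℝ) T, (1 / n) * ∑ β, (f t β - y β) ^ 2 ≤ C₀)
    (K2 : ℝ → Fin n → Fin n → ℝ)
    (K3 : ℝ → Fin n → Fin n → Fin n → ℝ)
    (K4 : ℝ → Fin n → Fin n → Fin n → Fin n → ℝ)
    (dK2 : ℝ → Fin n → Fin n → ℝ)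
    (hK2deriv : ∀ t ∈ Set.Icc (0 : ℝ) T, ∀ α₁ α₂,
      HasDerivWithinAt (fun s => K2 s α₁ α₂) (dK2 t α₁ α₂) (Set.Icc 0 T) t)
    (hdK2 : ∀ t ∈ Set.Icc (0 : ℝ) T, ∀ α₁ α₂,
      dK2 t α₁ α₂ = -(1 / n) * ∑ β, K3 t α₁ α₂ β * (f t β - y β))
    (hK3deriv : ∀ t ∈ Set.Icc (0 : ℝ) T, ∀ α₁ α₂ α₃,
      HasDerivWithinAt (fun s => K3 s α₁ α₂ α₃)
        (-(1 / n) * ∑ β, K4 t α₁ α₂ α₃ β * (f t β - y β)) (Set.Icc 0 T) t)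
    (hK30 : ∀ α₁ α₂ α₃, |K3 0 α₁ α₂ α₃| ≤ B)
    (hK4 : ∀ t ∈ Set.Icc (0 : ℝ) T, ∀ α₁ α₂ α₃ α₄, |K4 t α₁ α₂ α₃ α₄| ≤ B) :
    ∀ t ∈ Set.Icc (0 : ℝ) T, ∀ α₁ α₂,
      |dK2 t α₁ α₂| ≤ B * Real.sqrt C₀ * (1 + Real.sqrt C₀ * t) :=
  stmt_13_general n T B C₀ hB y f hf K3 K4 dK2 hdK2 hK3deriv hK30 hK4
end
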